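/- Elimination of the Eulerian terms E_{r+s−j,j} for q ≤ j ≤ p−1 in the (r+1)-th level (the content of recursion (3.6) in the proof of Theorem 3.4, case q < p): fix integers 1 ≤ s < r, integers q, p with 0 ≤ q < p ≤ s, and real numbers b_q, …, b_r with b_q ≠ 0; set v_r := ∑_{j=q}^{r} b_j·E_{r−j,j}. Then for every choice of real numbers β_q, …, β_{p−1} there exist real numbers c_0, …, c_{p−q−1} and real numbers γ_m for p ≤ m ≤ r + p − q − 1 such that [ ∑_{j=0}^{p−q−1} c_j·E_{s−j,j} , v_r ] = ∑_{m=q}^{p−1} β_m·E_{r+s−m,m} + ∑_{m=p}^{r+p−q−1} γ_m·E_{r+s−m,m} as maps ℝ⁴ → ℝ⁴. -/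

import Mathlib

/-- Lie bracket of vector fields on ℝ⁴: [V,W](x) = DV(x)(W(x)) − DW(x)(V(x)). -/
noncomputable def bracket (V W : (Fin 4 → ℝ) → (Fin 4 → ℝ)) : (Fin 4 → ℝ) → (Fin 4 → ℝ) :=
  fun x => fderiv ℝ V x (W x) - fderiv ℝ W x (V x)

/-- The Eulerian vector field E₀₀(x) = x. -/
def E00 : (Fin 4 → ℝ) → (Fin 4 → ℝ) := fun x => x

/-- The rotational vector fields Θ¹₀₀(x) = (−y₁, x₁, 0, 0) and Θ²₀₀(x) = (0, 0, −y₂, x₂). -/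
def Theta0 (i : Fin 2) : (Fin 4 → ℝ) → (Fin 4 → ℝ) :=
  if i = 0 then (fun x => ![-(x 1), x 0, 0, 0]) else (fun x => ![0, 0, -(x 3), x 2])

/-- Z_{m,n}(x) = (x₁² + y₁²)^m (x₂² + y₂²)^n. -/
def Z (m n : ℕ) : (Fin 4 → ℝ) → ℝ :=
  fun x => ((x 0) ^ 2 + (x 1) ^ 2) ^ m * ((x 2) ^ 2 + (x 3) ^ 2) ^ n

/-- E_{m,n} = Z_{m,n} · E₀₀. -/
def Emn (m n : ℕ) : (Fin 4 → ℝ) → (Fin 4 → ℝ) := fun x => Z m n x • E00 x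

/-- Θ^i_{m,n} = Z_{m,n} · Θ^i₀₀. -/
def Thmn (i : Fin 2) (m n : ℕ) : (Fin 4 → ℝ) → (Fin 4 → ℝ) := fun x => Z m n x • Theta0 i x

/-! Both fields are radial, `P x • x` and `Q x • x` with `P`, `Q` homogeneous of degrees `2s` and
`2r`, so by Euler's identity their bracket is `2(s - r) P Q x • x`. Expanding `P Q` in the monomials
`Z (r + s - m) m`, the coefficients with `m < p` are the Cauchy product of `c` with `k ↦ b (q + k)`:
a triangular system with diagonal `b q ≠ 0`, solved by inverting the power series of `b`. -/

open Finset

theorem exists_sum_range_mul_eq {K : Type*} [Field K] {b : ℕ → K} (hb : b 0 ≠ 0) (t : ℕ → K) :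
    ∃ c : ℕ → K, ∀ k, ∑ i ∈ range (k + 1), c i * b (k - i) = t k := by
  refine ⟨fun i => PowerSeries.coeff i (PowerSeries.mk t * (PowerSeries.mk b)⁻¹), fun k => ?_⟩
  have hB : PowerSeries.constantCoeff (PowerSeries.mk b) ≠ 0 := by
    rwa [← PowerSeries.coeff_zero_eq_constantCoeff_apply, PowerSeries.coeff_mk]
  have key := congrArg (PowerSeries.coeff k)
    (show PowerSeries.mk t * (PowerSeries.mk b)⁻¹ * PowerSeries.mk b = PowerSeries.mk t by
      rw [mul_assoc, PowerSeries.inv_mul_cancel _ hB, mul_one])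
  rw [PowerSeries.coeff_mul, Nat.sum_antidiagonal_eq_sum_range_succ
    (fun i j => PowerSeries.coeff i _ * PowerSeries.coeff j _)] at key
  simpa only [PowerSeries.coeff_mk] using key

theorem fderiv_apply_self_of_homogeneous {E : Type*} [NormedAddCommGroup E] [NormedSpace ℝ E]
    {f : E → ℝ} {x : E} {d : ℕ} (hf : DifferentiableAt ℝ f x)
    (hhom : ∀ t : ℝ, f (t • x) = t ^ d * f x) : fderiv ℝ f x x = d * f x := by
  have hray : HasDerivAt (fun t : ℝ => t • x) x 1 := by
    simpa using (hasDerivAt_id (1 : ℝ)).smul_const x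
  have hchain : HasDerivAt (fun t : ℝ => f (t • x)) (fderiv ℝ f x x) 1 := by
    have hf' : HasFDerivAt f (fderiv ℝ f x) ((fun t : ℝ => t • x) 1) := by
      simpa using hf.hasFDerivAt
    exact hf'.comp_hasDerivAt (1 : ℝ) hray
  have hpow : HasDerivAt (fun t : ℝ => t ^ d * f x) (d * f x) 1 := by
    simpa using (hasDerivAt_pow d (1 : ℝ)).mul_const (f x)
  simp only [hhom] at hchain
  exact hchain.unique hpow

theorem bracket_smul_self_apply {P Q : (Fin 4 → ℝ) → ℝ} {x : Fin 4 → ℝ}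
    (hP : DifferentiableAt ℝ P x) (hQ : DifferentiableAt ℝ Q x) :
    bracket (fun y => P y • y) (fun y => Q y • y) x
      = (Q x * fderiv ℝ P x x - P x * fderiv ℝ Q x x) • x := by
  have hPid : HasFDerivAt (fun y => P y • y) _ x := hP.hasFDerivAt.smul (hasFDerivAt_id x)
  have hQid : HasFDerivAt (fun y => Q y • y) _ x := hQ.hasFDerivAt.smul (hasFDerivAt_id x)
  simp only [bracket, hPid.fderiv, hQid.fderiv, add_apply,
    smul_apply, ContinuousLinearMap.id_apply,
    ContinuousLinearMap.smulRight_apply, map_smul]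
  module

theorem bracket_smul_self_of_homogeneous {P Q : (Fin 4 → ℝ) → ℝ} {a b : ℕ}
    (hP : Differentiable ℝ P) (hQ : Differentiable ℝ Q)
    (hPhom : ∀ (t : ℝ) x, P (t • x) = t ^ a * P x) (hQhom : ∀ (t : ℝ) x, Q (t • x) = t ^ b * Q x) :
    bracket (fun y => P y • y) (fun y => Q y • y) = fun x => (((a : ℝ) - b) * (P x * Q x)) • x := by
  funext x
  rw [bracket_smul_self_apply (hP x) (hQ x),
    fderiv_apply_self_of_homogeneous (hP x) (hPhom · x),
    fderiv_apply_self_of_homogeneous (hQ x) (hQhom · x)]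
  congr 1
  ring

theorem Z_smul (m n : ℕ) (t : ℝ) (x : Fin 4 → ℝ) :
    Z m n (t • x) = t ^ (2 * (m + n)) * Z m n x := by
  simp only [Z, Pi.smul_apply, smul_eq_mul, mul_pow, ← mul_add, pow_mul]
  ring

theorem differentiable_Z (m n : ℕ) : Differentiable ℝ (Z m n) := by
  unfold Z
  fun_prop

theorem Z_mul_Z (m n m' n' : ℕ) (x : Fin 4 → ℝ) :
    Z m n x * Z m' n' x = Z (m + m') (n + n') x := by
  simp only [Z]
  ring

section SumZ

variable (S : Finset ℕ) (a : ℕ → ℝ) (d : ℕ)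

theorem sum_smul_Emn (x : Fin 4 → ℝ) :
    ∑ j ∈ S, a j • Emn (d - j) j x = (∑ j ∈ S, a j * Z (d - j) j x) • x := by
  simp only [Emn, E00, smul_smul, sum_smul]

theorem differentiable_sum_Z : Differentiable ℝ (fun x => ∑ j ∈ S, a j * Z (d - j) j x) := by
  have := differentiable_Z
  fun_prop

variable {S d}

theorem sum_Z_smul (hS : ∀ j ∈ S, j ≤ d) (t : ℝ) (x : Fin 4 → ℝ) :
    ∑ j ∈ S, a j * Z (d - j) j (t • x) = t ^ (2 * d) * ∑ j ∈ S, a j * Z (d - j) j x := by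
  rw [mul_sum]
  refine sum_congr rfl fun j hj => ?_
  rw [Z_smul, Nat.sub_add_cancel (hS j hj)]
  ring

end SumZ

def cauchyCoeff (S₁ S₂ : Finset ℕ) (a b : ℕ → ℝ) (m : ℕ) : ℝ :=
  ∑ i ∈ S₁, ∑ j ∈ S₂, if i + j = m then a i * b j else 0

theorem sum_Z_mul_sum_Z {S₁ S₂ T : Finset ℕ} {d₁ d₂ : ℕ} (h₁ : ∀ i ∈ S₁, i ≤ d₁)
    (h₂ : ∀ j ∈ S₂, j ≤ d₂) (hT : ∀ i ∈ S₁, ∀ j ∈ S₂, i + j ∈ T) (a b : ℕ → ℝ) (x : Fin 4 → ℝ) :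
    (∑ i ∈ S₁, a i * Z (d₁ - i) i x) * (∑ j ∈ S₂, b j * Z (d₂ - j) j x)
      = ∑ m ∈ T, cauchyCoeff S₁ S₂ a b m * Z (d₁ + d₂ - m) m x := by
  have hterm : ∀ i ∈ S₁, ∀ j ∈ S₂, a i * Z (d₁ - i) i x * (b j * Z (d₂ - j) j x)
      = ∑ m ∈ T, if i + j = m then a i * b j * Z (d₁ + d₂ - m) m x else 0 := by
    intro i hi j hj
    rw [sum_ite_eq, if_pos (hT i hi j hj), mul_mul_mul_comm, Z_mul_Z]
    congr 3
    have := h₁ i hi; have := h₂ j hj; omega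
  calc _ = ∑ i ∈ S₁, ∑ j ∈ S₂, ∑ m ∈ T,
        if i + j = m then a i * b j * Z (d₁ + d₂ - m) m x else 0 := by
        rw [sum_mul_sum]
        exact sum_congr rfl fun i hi => sum_congr rfl (hterm i hi)
    _ = ∑ m ∈ T, ∑ i ∈ S₁, ∑ j ∈ S₂,
        if i + j = m then a i * b j * Z (d₁ + d₂ - m) m x else 0 :=
        (sum_congr rfl fun i _ => sum_comm).trans sum_comm
    _ = _ := by simp only [cauchyCoeff, sum_mul, ite_mul, zero_mul]

theorem cauchyCoeff_range_Icc_add (c b : ℕ → ℝ) {n q r k : ℕ} (hkn : k < n) (hkr : q + k ≤ r) :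
    cauchyCoeff (range n) (Icc q r) c b (q + k) = ∑ i ∈ range (k + 1), c i * b (q + (k - i)) := by
  have hinner : ∀ i, ∑ j ∈ Icc q r, (if i + j = q + k then c i * b j else 0)
      = if i ≤ k then c i * b (q + (k - i)) else 0 := by
    intro i
    split_ifs with hik
    · rw [sum_eq_single_of_mem (q + (k - i)) (by simp only [mem_Icc]; omega)
        fun j hj hne => if_neg (by simp only [mem_Icc] at hj; omega)]
      rw [if_pos (by omega)]
    · exact sum_eq_zero fun j hj => if_neg (by simp only [mem_Icc] at hj; omega)
  rw [cauchyCoeff, sum_congr rfl fun i _ => hinner i, ← sum_filter]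
  congr 1
  ext i
  simp only [mem_filter, mem_range]
  omega

theorem exists_cauchyCoeff_range_Icc_eq {q p r : ℕ} (hqp : q < p) (hpr : p ≤ r + 1)
    {b : ℕ → ℝ} (hb : b q ≠ 0) (t : ℕ → ℝ) :
    ∃ c : ℕ → ℝ, ∀ m ∈ Icc q (p - 1), cauchyCoeff (range (p - q)) (Icc q r) c b m = t m := by
  obtain ⟨c, hc⟩ := exists_sum_range_mul_eq (b := fun k => b (q + k)) (by simpa using hb)
    (fun k => t (q + k))
  refine ⟨c, fun m hm => ?_⟩
  simp only [mem_Icc] at hm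
  obtain ⟨k, rfl⟩ := Nat.exists_eq_add_of_le hm.1
  rw [cauchyCoeff_range_Icc_add c b (by omega) (by omega), hc k]

theorem mul_sum_Icc_eq_add {q p N : ℕ} (hqp : q < p) (hpN : p ≤ N + 1) {κ : ℝ} {A β F : ℕ → ℝ}
    (hlow : ∀ m ∈ Icc q (p - 1), κ * A m = β m) :
    κ * ∑ m ∈ Icc q N, A m * F m
      = ∑ m ∈ Icc q (p - 1), β m * F m + ∑ m ∈ Icc p N, κ * A m * F m := by
  have hsplit : Icc q N = Icc q (p - 1) ∪ Icc p N := by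
    ext m; simp only [mem_union, mem_Icc]; omega
  have hdisj : Disjoint (Icc q (p - 1)) (Icc p N) :=
    disjoint_left.mpr fun m h₁ h₂ => by simp only [mem_Icc] at h₁ h₂; omega
  rw [hsplit, sum_union hdisj, mul_add, mul_sum, mul_sum]
  congr 1
  · exact sum_congr rfl fun m hm => by rw [← hlow m hm, mul_assoc]
  · exact sum_congr rfl fun m _ => (mul_assoc _ _ _).symm

theorem eulerian_elimination_r_level_general (s r p q : ℕ) (hsr : s < r)
    (hqp : q < p) (hp : p ≤ s) (b : ℕ → ℝ) (hb : b q ≠ 0) (β : ℕ → ℝ) :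
    ∃ c γ : ℕ → ℝ,
      bracket (fun x => ∑ j ∈ Finset.range (p - q), c j • Emn (s - j) j x)
              (fun x => ∑ j ∈ Finset.Icc q r, b j • Emn (r - j) j x) =
      (fun x : Fin 4 → ℝ =>
        (∑ m ∈ Finset.Icc q (p - 1), β m • Emn (r + s - m) m x) +
          ∑ m ∈ Finset.Icc p (r + p - q - 1), γ m • Emn (r + s - m) m x) := by
  set κ : ℝ := 2 * (s : ℝ) - 2 * r
  have hκ : κ ≠ 0 := by
    have : (s : ℝ) < r := by exact_mod_cast hsr
    simp only [κ]; intro h; linarith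
  obtain ⟨c, hc⟩ := exists_cauchyCoeff_range_Icc_eq (r := r) hqp (by omega) hb (fun m => β m / κ)
  refine ⟨c, fun m => κ * cauchyCoeff (range (p - q)) (Icc q r) c b m, ?_⟩
  simp only [sum_smul_Emn]
  rw [bracket_smul_self_of_homogeneous (differentiable_sum_Z _ _ _) (differentiable_sum_Z _ _ _)
    (sum_Z_smul c (d := s) (fun j hj => by simp only [mem_range] at hj; omega))
    (sum_Z_smul b (d := r) (fun j hj => by simp only [mem_Icc] at hj; omega))]
  funext x
  rw [← add_smul, sum_Z_mul_sum_Z (T := Icc q (r + p - q - 1))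
    (fun i hi => by simp only [mem_range] at hi; omega)
    (fun j hj => by simp only [mem_Icc] at hj; omega)
    (fun i hi j hj => by simp only [mem_range, mem_Icc] at hi hj ⊢; omega), add_comm s r]
  push_cast
  exact congrArg (· • x) (mul_sum_Icc_eq_add (N := r + p - q - 1) hqp (by omega)
    fun m hm => by rw [hc m hm, mul_div_cancel₀ _ hκ])

/-- elimination of the Eulerian terms E_{r+s−j,j} for q ≤ j ≤ p−1 in the
(r+1)-th level (recursion (3.6), case q < p). -/
theorem eulerian_elimination_r_level (s r p q : ℕ) (hs : 1 ≤ s) (hsr : s < r)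
    (hqp : q < p) (hp : p ≤ s) (b : ℕ → ℝ) (hb : b q ≠ 0) (β : ℕ → ℝ) :
    ∃ c γ : ℕ → ℝ,
      bracket (fun x => ∑ j ∈ Finset.range (p - q), c j • Emn (s - j) j x)
              (fun x => ∑ j ∈ Finset.Icc q r, b j • Emn (r - j) j x) =
      (fun x : Fin 4 → ℝ =>
        (∑ m ∈ Finset.Icc q (p - 1), β m • Emn (r + s - m) m x) +
          ∑ m ∈ Finset.Icc p (r + p - q - 1), γ m • Emn (r + s - m) m x) :=
  eulerian_elimination_r_level_general s r p q hsr hqp hp b hb β
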